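/- arXiv:2401.07091 — 3 statements merged into one kernel-verified Lean document; each statement's English description precedes it below -/
import Mathlib

section
/- Let C' be a clustering of X into at least three groups, let T' be a minimum spanning tree of G_{C'}, and let C'_i, C'_j be two groups of C' with spacing(C'_i, C'_j) = Min-Sp(C') (so that the edge C'_iC'_j, being the minimum-weight edge of G_{C'}, belongs to T'). Let C^a be the clustering obtained from C' by merging C'_i and C'_j into the single group C'_i ∪ C'_j. Then the tree T^a obtained from T' by contracting the edge between C'_i and C'_j (identifying these two vertices with the vertex C'_i ∪ C'_j, and regarding the resulting edges as edges of G_{C^a} with the weights of G_{C^a}) is a minimum spanning tree of G_{C^a}. -/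
/-!
Contracting an edge `ab` of a tree `T` gives a spanning tree of the contracted graph: `a` and `b`
have no common neighbour in `T`, so no other two edges collapse and exactly one edge is lost. Since
merging two groups can only decrease spacings, the contracted tree weighs at most `w(T) - w(ab)`.
Conversely, a spanning tree `S` of the merged clustering lifts to a spanning tree of the original
one of weight `w(S) + w(ab)`: add `ab`, and replace each edge at the merged group by the edge to
whichever of the two halves realises its spacing. Minimality of `T` therefore passes to the
contraction. That `ab` lies in `T` at all is the exchange argument: with distinct distances, the
closest pair of groups is strictly the lightest edge at `a`.
-/

open scoped Classical

namespace ClusterSpacing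

variable {X : Type*}

/-- The spacing between two groups: the minimum (infimum) distance between a
point of `A` and a point of `B`. -/
noncomputable def spacing (dist : X → X → ℝ) (A B : Set X) : ℝ :=
  sInf {d : ℝ | ∃ x ∈ A, ∃ y ∈ B, d = dist x y}

/-- The weight of an (unordered) edge between two groups. For symmetric `dist`
this coincides with `spacing`. -/
noncomputable def edgeWeight (dist : X → X → ℝ) : Sym2 (Set X) → ℝ :=
  Sym2.lift ⟨fun A B =>
    sInf ({d : ℝ | ∃ x ∈ A, ∃ y ∈ B, d = dist x y} ∪
          {d : ℝ | ∃ x ∈ B, ∃ y ∈ A, d = dist x y}),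
    fun A B => by beta_reduce; rw [Set.union_comm]⟩

/-- A clustering of `X`: a partition of `X` into nonempty groups. -/
def IsClustering (𝒞 : Set (Set X)) : Prop :=
  (∀ A ∈ 𝒞, A.Nonempty) ∧ ⋃₀ 𝒞 = Set.univ ∧
    ∀ A ∈ 𝒞, ∀ B ∈ 𝒞, A ≠ B → Disjoint A B

/-- The minimum spacing of a clustering: the minimum spacing over pairs of
distinct groups. -/
noncomputable def MinSp (dist : X → X → ℝ) (𝒞 : Set (Set X)) : ℝ :=
  sInf {d : ℝ | ∃ A ∈ 𝒞, ∃ B ∈ 𝒞, A ≠ B ∧ d = spacing dist A B}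

/-- Total weight of (the edges of) a graph on the groups of a clustering. -/
noncomputable def treeCost (dist : X → X → ℝ) (𝒞 : Set (Set X))
    (T : SimpleGraph {A : Set X // A ∈ 𝒞}) : ℝ :=
  ∑ᶠ e ∈ T.edgeSet, edgeWeight dist (Sym2.map Subtype.val e)

/-- The MST spacing of a clustering: the minimum, over all spanning trees of the
complete graph on the groups, of the total edge weight. -/
noncomputable def MSTSp (dist : X → X → ℝ) (𝒞 : Set (Set X)) : ℝ :=
  sInf {c : ℝ | ∃ T : SimpleGraph {A : Set X // A ∈ 𝒞}, T.IsTree ∧ treeCost dist 𝒞 T = c}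

/-- `T` is a minimum spanning tree of the complete graph `G_𝒞` on the groups of `𝒞`. -/
def IsMST (dist : X → X → ℝ) (𝒞 : Set (Set X))
    (T : SimpleGraph {A : Set X // A ∈ 𝒞}) : Prop :=
  T.IsTree ∧ ∀ T' : SimpleGraph {A : Set X // A ∈ 𝒞}, T'.IsTree →
    treeCost dist 𝒞 T ≤ treeCost dist 𝒞 T'

/-- `SingleLinkage dist t 𝒟` holds iff `𝒟` is the collection of groups present
after `t` merging steps of the single-linkage algorithm. -/
inductive SingleLinkage (dist : X → X → ℝ) : ℕ → Set (Set X) → Prop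
  | zero : SingleLinkage dist 0 {A : Set X | ∃ x : X, A = {x}}
  | succ (t : ℕ) (𝒟 : Set (Set X)) (A B : Set X) :
      SingleLinkage dist t 𝒟 → A ∈ 𝒟 → B ∈ 𝒟 → A ≠ B →
      (∀ A' ∈ 𝒟, ∀ B' ∈ 𝒟, A' ≠ B' → spacing dist A B ≤ spacing dist A' B') →
      SingleLinkage dist (t + 1) (insert (A ∪ B) (𝒟 \ {A, B}))

/-- The list of edge weights of a graph on the groups of a clustering, sorted
in nondecreasing order. -/
noncomputable def edgeWeightsSorted [Fintype X] (dist : X → X → ℝ) (𝒞 : Set (Set X))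
    (T : SimpleGraph {A : Set X // A ∈ 𝒞}) : List ℝ :=
  Multiset.sort
    ((T.edgeSet.toFinite.toFinset.val).map (fun e => edgeWeight dist (Sym2.map Subtype.val e))) (· ≤ ·)

end ClusterSpacing

open Function

namespace SimpleGraph

variable {V W : Type*}

lemma Reachable.map_of_forall_adj {G : SimpleGraph V} {H : SimpleGraph W} {f : V → W}
    (h : ∀ u v, G.Adj u v → H.Reachable (f u) (f v)) {u v : V} (huv : G.Reachable u v) :
    H.Reachable (f u) (f v) := by
  rw [reachable_iff_reflTransGen] at huv ⊢
  exact Relation.ReflTransGen.lift' f (fun x y hxy ↦ (reachable_iff_reflTransGen _ _).1 (h x y hxy))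
    _ _ huv

lemma isTree_iff_connected_and_ncard [Finite V] {G : SimpleGraph V} :
    G.IsTree ↔ G.Connected ∧ G.edgeSet.ncard + 1 = Nat.card V := by
  rw [isTree_iff_connected_and_card, Nat.card_coe_set_eq]

lemma IsAcyclic.not_adj_of_adj_of_adj {G : SimpleGraph V} (hG : G.IsAcyclic) {a b : V}
    (hab : G.Adj a b) (x : V) (hxa : G.Adj x a) (hxb : G.Adj x b) : False := by
  have hdirect : (hxb.toWalk).IsPath := by simp [hxb.ne]
  have hvia : (Walk.cons hxa hab.toWalk).IsPath := by simp [hxa.ne, hxb.ne, hab.ne]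
  have := congrArg (fun p : G.Path x b ↦ p.1.length)
    ((hG.subsingleton_path x b).elim ⟨_, hdirect⟩ ⟨_, hvia⟩)
  simp at this

lemma edgeSet_deleteEdges_sup_edge (G : SimpleGraph V) {a b : V} (hab : a ≠ b) (e : Sym2 V) :
    (G.deleteEdges {e} ⊔ edge a b).edgeSet = insert s(a, b) (G.edgeSet \ {e}) := by
  rw [edgeSet_sup, edgeSet_deleteEdges, edgeSet_edge_of_ne hab, Set.union_singleton]

/-- `ad` is the first edge of the tree path from `a` to `b`. -/
lemma IsTree.exists_isTree_deleteEdges_sup_edge [Finite V] {T : SimpleGraph V} (hT : T.IsTree)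
    {a b : V} (hab : a ≠ b) (hn : ¬T.Adj a b) :
    ∃ d, T.Adj a d ∧ d ≠ b ∧ (T.deleteEdges {s(a, d)} ⊔ edge a b).IsTree := by
  obtain ⟨p, hp⟩ := (hT.connected.preconnected a b).some.toPath
  cases p with
  | nil => exact absurd rfl hab
  | @cons _ d _ had q =>
    obtain ⟨-, ha⟩ := (Walk.cons_isPath_iff _ _).1 hp
    have hdb : d ≠ b := by rintro rfl; exact hn had
    refine ⟨d, had, hdb, ?_⟩
    set T' := T.deleteEdges {s(a, d)} ⊔ edge a b
    have hedges := T.edgeSet_deleteEdges_sup_edge hab s(a, d)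
    have hdb' : T'.Reachable d b := ⟨q.transfer T' fun e he ↦ by
      rw [hedges]
      refine Set.mem_insert_of_mem _ ⟨q.edges_subset_edgeSet he, ?_⟩
      rintro rfl
      exact ha (q.fst_mem_support_of_mem_edges he)⟩
    have hab' : T'.Adj a b := by simp [T', edge_adj, hab]
    have hconn : T'.Connected := by
      refine (connected_iff _).2 ⟨fun u v ↦ ?_, ⟨a⟩⟩
      refine Reachable.map_of_forall_adj (f := id) (fun x y hxy ↦ ?_)
        (hT.connected.preconnected u v)
      by_cases hxy' : s(x, y) = s(a, d)
      · rcases Sym2.eq_iff.1 hxy' with ⟨rfl, rfl⟩ | ⟨rfl, rfl⟩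
        exacts [hab'.reachable.trans hdb'.symm, hdb'.trans hab'.reachable.symm]
      · exact Adj.reachable (by simp [T', hxy, hxy'])
    refine isTree_iff_connected_and_ncard.2 ⟨hconn, ?_⟩
    rw [hedges, Set.ncard_insert_of_notMem (fun h ↦ hn h.1),
      Set.ncard_sdiff_singleton_add_one (T.mem_edgeSet.2 had)]
    exact (isTree_iff_connected_and_ncard.1 hT).2

lemma mk_mem_image_map_edgeSet {G : SimpleGraph V} {f : V → W} {x y : W} :
    s(x, y) ∈ Sym2.map f '' G.edgeSet ↔ ∃ u v, G.Adj u v ∧ f u = x ∧ f v = y := by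
  constructor
  · rintro ⟨e, he, h⟩
    induction e using Sym2.ind with
    | _ u v =>
      rcases Sym2.eq_iff.1 h with ⟨rfl, rfl⟩ | ⟨rfl, rfl⟩
      exacts [⟨u, v, he, rfl, rfl⟩, ⟨v, u, G.adj_symm he, rfl, rfl⟩]
  · rintro ⟨u, v, huv, rfl, rfl⟩
    exact ⟨s(u, v), huv, rfl⟩

-- `fromEdgeSet (Sym2.map f '' G.edgeSet)` is the image of `G` under `f` with collapsed edges
-- dropped; for an edge contraction `f` it is the contracted graph.
lemma Connected.fromEdgeSet_image {G : SimpleGraph V} (hG : G.Connected) {f : V → W}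
    (hf : Surjective f) : (fromEdgeSet (Sym2.map f '' G.edgeSet)).Connected := by
  refine (connected_iff _).2 ⟨fun x y ↦ ?_, hG.nonempty.map f⟩
  obtain ⟨u, rfl⟩ := hf x
  obtain ⟨v, rfl⟩ := hf y
  refine Reachable.map_of_forall_adj (fun u v huv ↦ ?_) (hG.preconnected u v)
  by_cases h : f u = f v
  · rw [h]
  · exact Adj.reachable ((fromEdgeSet_adj _).2 ⟨⟨s(u, v), huv, rfl⟩, h⟩)

def IsMinSpanningTree (w : Sym2 V → ℝ) (T : SimpleGraph V) : Prop :=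
  T.IsTree ∧ ∀ S : SimpleGraph V, S.IsTree → ∑ᶠ e ∈ T.edgeSet, w e ≤ ∑ᶠ e ∈ S.edgeSet, w e

lemma IsMinSpanningTree.adj_of_forall_lt [Finite V] {w : Sym2 V → ℝ} {T : SimpleGraph V}
    (hT : IsMinSpanningTree w T) {a b : V} (hab : a ≠ b)
    (hlt : ∀ d, d ≠ a → d ≠ b → w s(a, b) < w s(a, d)) : T.Adj a b := by
  by_contra hn
  obtain ⟨d, had, hdb, hT'⟩ := hT.1.exists_isTree_deleteEdges_sup_edge hab hn
  have hcost := hT.2 _ hT'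
  have hfin : T.edgeSet.Finite := Set.toFinite _
  rw [edgeSet_deleteEdges_sup_edge _ hab, finsum_mem_insert _ (fun h ↦ hn h.1) hfin.sdiff] at hcost
  have hsplit :=
    finsum_mem_add_sdiff (f := w) (Set.singleton_subset_iff.2 (T.mem_edgeSet.2 had)) hfin
  rw [finsum_mem_singleton] at hsplit
  linarith [hlt d had.ne' hdb]

structure IsEdgeContraction (φ : V → W) (a b : V) : Prop where
  ne : a ≠ b
  apply_eq : φ a = φ b
  surjective : Surjective φ
  eq_or_eq_of_apply_eq : ∀ ⦃u v⦄, φ u = φ v → u = v ∨ s(u, v) = s(a, b)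

namespace IsEdgeContraction

variable {φ : V → W} {a b : V}

protected lemma finite [Finite V] (hφ : IsEdgeContraction φ a b) : Finite W :=
  .of_surjective φ hφ.surjective

lemma natCard_eq [Finite V] (hφ : IsEdgeContraction φ a b) : Nat.card V = Nat.card W + 1 := by
  have hinj : Set.InjOn φ {b}ᶜ := fun u hu v hv h ↦
    (hφ.eq_or_eq_of_apply_eq h).resolve_right fun h' ↦ by
      rcases Sym2.eq_iff.1 h' with ⟨-, rfl⟩ | ⟨rfl, -⟩
      exacts [hv rfl, hu rfl]
  have himage : φ '' {b}ᶜ = Set.univ := Set.eq_univ_of_forall fun x ↦ by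
    obtain ⟨u, rfl⟩ := hφ.surjective x
    by_cases hu : u = b
    · exact ⟨a, hφ.ne, hu ▸ hφ.apply_eq⟩
    · exact ⟨u, hu, rfl⟩
  rw [← Set.ncard_univ W, ← himage, hinj.ncard_image, ← Set.ncard_univ V,
    ← Set.ncard_sdiff_singleton_add_one (Set.mem_univ b), Set.compl_eq_univ_sdiff]

lemma edgeSet_fromEdgeSet_image (hφ : IsEdgeContraction φ a b) (G : SimpleGraph V) :
    (fromEdgeSet (Sym2.map φ '' G.edgeSet)).edgeSet = Sym2.map φ '' (G.edgeSet \ {s(a, b)}) := by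
  rw [edgeSet_fromEdgeSet]
  ext e
  constructor
  · rintro ⟨⟨e, he, rfl⟩, hdiag⟩
    refine ⟨e, ⟨he, ?_⟩, rfl⟩
    rintro rfl
    exact hdiag (by simp [hφ.apply_eq])
  · rintro ⟨e, ⟨he, hne⟩, rfl⟩
    refine ⟨⟨e, he, rfl⟩, ?_⟩
    induction e using Sym2.ind with
    | _ u v =>
      simp only [Sym2.map_mk, Sym2.mem_diagSet, Sym2.mk_isDiag_iff]
      intro h
      rcases hφ.eq_or_eq_of_apply_eq h with rfl | h
      exacts [(G.ne_of_adj he rfl).elim, hne h]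

lemma injOn_map_edgeSet_diff (hφ : IsEdgeContraction φ a b) {G : SimpleGraph V}
    (hG : ∀ x, G.Adj x a → G.Adj x b → False) :
    Set.InjOn (Sym2.map φ) (G.edgeSet \ {s(a, b)}) := by
  -- Two such edges with the same image would give a common neighbour of `a` and `b`.
  have heq : ∀ ⦃u v u' v'⦄, G.Adj u v → G.Adj u' v' → s(u, v) ≠ s(a, b) → s(u', v') ≠ s(a, b) →
      φ u = φ u' → φ v = φ v' → s(u, v) = s(u', v') := by
    intro u v u' v' huv hu'v' hne hne' hu hv
    rcases hφ.eq_or_eq_of_apply_eq hu with rfl | hu <;>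
      rcases hφ.eq_or_eq_of_apply_eq hv with rfl | hv
    · rfl
    · rcases Sym2.eq_iff.1 hv with ⟨rfl, rfl⟩ | ⟨rfl, rfl⟩
      exacts [(hG u huv hu'v').elim, (hG u hu'v' huv).elim]
    · rcases Sym2.eq_iff.1 hu with ⟨rfl, rfl⟩ | ⟨rfl, rfl⟩
      exacts [(hG v huv.symm hu'v'.symm).elim, (hG v hu'v'.symm huv.symm).elim]
    · rcases Sym2.eq_iff.1 hu with ⟨rfl, rfl⟩ | ⟨rfl, rfl⟩ <;>
        rcases Sym2.eq_iff.1 hv with ⟨rfl, rfl⟩ | ⟨rfl, rfl⟩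
      all_goals first
        | exact (huv.ne rfl).elim
        | exact (hne rfl).elim
        | exact (hne Sym2.eq_swap).elim
  rintro e ⟨he, hne⟩ e' ⟨he', hne'⟩ h
  induction e using Sym2.ind with
  | _ u v =>
  induction e' using Sym2.ind with
  | _ u' v' =>
  rw [Sym2.map_mk, Sym2.map_mk, Sym2.eq_iff] at h
  rcases h with ⟨hu, hv⟩ | ⟨hu, hv⟩
  · exact heq he he' hne hne' hu hv
  · exact (heq he (G.adj_symm he') hne (Sym2.eq_swap.trans_ne hne') hu hv).trans Sym2.eq_swap

lemma isTree_fromEdgeSet_image [Finite V] (hφ : IsEdgeContraction φ a b) {T : SimpleGraph V}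
    (hT : T.IsTree) (hab : T.Adj a b) : (fromEdgeSet (Sym2.map φ '' T.edgeSet)).IsTree := by
  have := hφ.finite
  refine isTree_iff_connected_and_ncard.2 ⟨hT.connected.fromEdgeSet_image hφ.surjective, ?_⟩
  rw [hφ.edgeSet_fromEdgeSet_image,
    (hφ.injOn_map_edgeSet_diff (hT.isAcyclic.not_adj_of_adj_of_adj hab)).ncard_image]
  have hT := (isTree_iff_connected_and_ncard.1 hT).2
  have hdiff := Set.ncard_sdiff_singleton_add_one (T.mem_edgeSet.2 hab)
  have hcard := hφ.natCard_eq
  omega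

lemma finsum_fromEdgeSet_image_add_le [Finite V] (hφ : IsEdgeContraction φ a b)
    {T : SimpleGraph V} (hT : T.IsAcyclic) (hab : T.Adj a b) {w : Sym2 V → ℝ}
    {w' : Sym2 W → ℝ} (hle : ∀ u v, φ u ≠ φ v → w' s(φ u, φ v) ≤ w s(u, v)) :
    ∑ᶠ e ∈ (fromEdgeSet (Sym2.map φ '' T.edgeSet)).edgeSet, w' e + w s(a, b) ≤
      ∑ᶠ e ∈ T.edgeSet, w e := by
  have hfin : (T.edgeSet \ {s(a, b)}).Finite := Set.toFinite _
  rw [hφ.edgeSet_fromEdgeSet_image, finsum_mem_image (hφ.injOn_map_edgeSet_diff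
    (hT.not_adj_of_adj_of_adj hab)), ← finsum_mem_add_sdiff (f := w)
    (Set.singleton_subset_iff.2 (T.mem_edgeSet.2 hab)) (Set.toFinite _),
    finsum_mem_singleton, add_comm (w _), finsum_mem_eq_finite_toFinset_sum _ hfin,
    finsum_mem_eq_finite_toFinset_sum _ hfin]
  gcongr with e he
  rw [Set.Finite.mem_toFinset] at he
  induction e using Sym2.ind with
  | _ u v =>
    refine hle u v fun h ↦ ?_
    rcases hφ.eq_or_eq_of_apply_eq h with rfl | h
    exacts [T.ne_of_adj he.1 rfl, he.2 h]

section Lift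

variable {S : SimpleGraph W} {ℓ : Sym2 W → Sym2 V}

lemma mk_notMem_image (hφ : IsEdgeContraction φ a b)
    (hℓ : Set.LeftInvOn (Sym2.map φ) ℓ S.edgeSet) :
    s(a, b) ∉ ℓ '' S.edgeSet := by
  rintro ⟨e, he, hab⟩
  have hdiag : (Sym2.map φ (ℓ e)).IsDiag := by rw [hab, Sym2.map_mk, hφ.apply_eq]; rfl
  exact S.not_isDiag_of_mem_edgeSet he (hℓ he ▸ hdiag)

lemma edgeSet_fromEdgeSet_insert_image (hφ : IsEdgeContraction φ a b)
    (hℓ : Set.LeftInvOn (Sym2.map φ) ℓ S.edgeSet) :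
    (fromEdgeSet (insert s(a, b) (ℓ '' S.edgeSet))).edgeSet = insert s(a, b) (ℓ '' S.edgeSet) := by
  rw [edgeSet_fromEdgeSet, sdiff_eq_left, Set.disjoint_left]
  rintro e (rfl | ⟨e, he, rfl⟩) hdiag
  · exact hφ.ne (Sym2.mk_isDiag_iff.1 hdiag)
  · exact S.not_isDiag_of_mem_edgeSet he (hℓ he ▸ hdiag.map)

lemma connected_fromEdgeSet_insert_image (hφ : IsEdgeContraction φ a b) (hS : S.Connected)
    (hℓ : Set.LeftInvOn (Sym2.map φ) ℓ S.edgeSet) :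
    (fromEdgeSet (insert s(a, b) (ℓ '' S.edgeSet))).Connected := by
  set S' := fromEdgeSet (insert s(a, b) (ℓ '' S.edgeSet))
  have hedges := hφ.edgeSet_fromEdgeSet_insert_image hℓ
  have hfiber : ∀ u v, φ u = φ v → S'.Reachable u v := by
    intro u v h
    rcases hφ.eq_or_eq_of_apply_eq h with rfl | h
    · rfl
    · refine Adj.reachable ?_
      rw [← mem_edgeSet, hedges, h]
      exact Set.mem_insert _ _
  have hadj : ∀ x y, S.Adj x y → ∃ u v, φ u = x ∧ φ v = y ∧ S'.Adj u v := by
    intro x y hxy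
    have hmem : ℓ s(x, y) ∈ S'.edgeSet := hedges ▸ Set.mem_insert_of_mem _ ⟨_, hxy, rfl⟩
    have hmap : (ℓ s(x, y)).map φ = s(x, y) := hℓ hxy
    revert hmem hmap
    refine Sym2.ind (fun u v hmem hmap ↦ ?_) (ℓ s(x, y))
    rcases Sym2.eq_iff.1 hmap with ⟨rfl, rfl⟩ | ⟨rfl, rfl⟩
    exacts [⟨u, v, rfl, rfl, hmem⟩, ⟨v, u, rfl, rfl, S'.adj_symm hmem⟩]
  set σ := surjInv hφ.surjective
  have hσ : ∀ x, φ (σ x) = x := surjInv_eq hφ.surjective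
  have hsection : ∀ x y, S.Adj x y → S'.Reachable (σ x) (σ y) := fun x y hxy ↦ by
    obtain ⟨u, v, rfl, rfl, huv⟩ := hadj x y hxy
    exact (hfiber _ _ (hσ _)).trans (huv.reachable.trans (hfiber _ _ (hσ _).symm))
  refine (connected_iff _).2 ⟨fun u v ↦ ?_, ⟨a⟩⟩
  exact (hfiber _ _ (hσ _).symm).trans ((Reachable.map_of_forall_adj hsection
    (hS.preconnected (φ u) (φ v))).trans (hfiber _ _ (hσ _)))

lemma isTree_fromEdgeSet_insert_image [Finite V] (hφ : IsEdgeContraction φ a b) (hS : S.IsTree)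
    (hℓ : Set.LeftInvOn (Sym2.map φ) ℓ S.edgeSet) :
    (fromEdgeSet (insert s(a, b) (ℓ '' S.edgeSet))).IsTree := by
  have := hφ.finite
  refine isTree_iff_connected_and_ncard.2
    ⟨hφ.connected_fromEdgeSet_insert_image hS.connected hℓ, ?_⟩
  rw [hφ.edgeSet_fromEdgeSet_insert_image hℓ, Set.ncard_insert_of_notMem (hφ.mk_notMem_image hℓ),
    hℓ.injOn.ncard_image, (isTree_iff_connected_and_ncard.1 hS).2, hφ.natCard_eq]

end Lift

lemma exists_isTree_finsum_eq [Finite V] (hφ : IsEdgeContraction φ a b) {w : Sym2 V → ℝ}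
    {w' : Sym2 W → ℝ}
    (hlift : ∀ x y, x ≠ y → ∃ u v, φ u = x ∧ φ v = y ∧ w s(u, v) = w' s(x, y))
    {S : SimpleGraph W} (hS : S.IsTree) :
    ∃ S' : SimpleGraph V, S'.IsTree ∧
      ∑ᶠ e ∈ S'.edgeSet, w e = ∑ᶠ e ∈ S.edgeSet, w' e + w s(a, b) := by
  have : ∀ e : Sym2 W, ∃ e' : Sym2 V, ¬e.IsDiag → e'.map φ = e ∧ w e' = w' e := by
    refine Sym2.ind fun x y ↦ ?_
    by_cases hxy : x = y
    · obtain ⟨u, -⟩ := hφ.surjective x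
      exact ⟨s(u, u), fun h ↦ (h (Sym2.mk_isDiag_iff.2 hxy)).elim⟩
    · obtain ⟨u, v, rfl, rfl, h⟩ := hlift x y hxy
      exact ⟨s(u, v), fun _ ↦ ⟨rfl, h⟩⟩
  choose ℓ hℓ using this
  have hinv : Set.LeftInvOn (Sym2.map φ) ℓ S.edgeSet :=
    fun e he ↦ (hℓ e (S.not_isDiag_of_mem_edgeSet he)).1
  refine ⟨_, hφ.isTree_fromEdgeSet_insert_image hS hinv, ?_⟩
  rw [hφ.edgeSet_fromEdgeSet_insert_image hinv,
    finsum_mem_insert _ (hφ.mk_notMem_image hinv) (Set.toFinite _), finsum_mem_image hinv.injOn,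
    add_comm]
  exact congrArg (· + _)
    (finsum_mem_congr rfl fun e he ↦ (hℓ e (S.not_isDiag_of_mem_edgeSet he)).2)

end IsEdgeContraction

theorem IsMinSpanningTree.fromEdgeSet_image [Finite V] {w : Sym2 V → ℝ} {w' : Sym2 W → ℝ}
    {T : SimpleGraph V} (hT : IsMinSpanningTree w T) {φ : V → W} {a b : V}
    (hφ : IsEdgeContraction φ a b) (hab : T.Adj a b)
    (hle : ∀ u v, φ u ≠ φ v → w' s(φ u, φ v) ≤ w s(u, v))
    (hlift : ∀ x y, x ≠ y → ∃ u v, φ u = x ∧ φ v = y ∧ w s(u, v) = w' s(x, y)) :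
    IsMinSpanningTree w' (fromEdgeSet (Sym2.map φ '' T.edgeSet)) := by
  refine ⟨hφ.isTree_fromEdgeSet_image hT.1 hab, fun S hS ↦ ?_⟩
  obtain ⟨S', hS', hcost⟩ := hφ.exists_isTree_finsum_eq hlift hS
  linarith [hφ.finsum_fromEdgeSet_image_add_le hT.1.isAcyclic hab hle, hT.2 S' hS']

end SimpleGraph

namespace ClusterSpacing

open SimpleGraph

variable {X : Type*}

lemma edgeWeight_mk (dist : X → X → ℝ) (hsymm : ∀ x y, dist x y = dist y x) (A B : Set X) :
    edgeWeight dist s(A, B) = spacing dist A B := by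
  have hswap : {d | ∃ x ∈ B, ∃ y ∈ A, d = dist x y} = {d | ∃ x ∈ A, ∃ y ∈ B, d = dist x y} := by
    ext
    constructor <;> rintro ⟨x, hx, y, hy, rfl⟩ <;> exact ⟨y, hy, x, hx, hsymm _ _⟩
  simp only [edgeWeight, Sym2.lift_mk, hswap, Set.union_self]
  rfl

lemma isMST_iff (dist : X → X → ℝ) (𝒞 : Set (Set X)) (T : SimpleGraph {A : Set X // A ∈ 𝒞}) :
    IsMST dist 𝒞 T ↔ IsMinSpanningTree (fun e ↦ edgeWeight dist (e.map Subtype.val)) T :=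
  Iff.rfl

section Finite

variable [Finite X] (dist : X → X → ℝ)

lemma spacing_set_finite (A B : Set X) : {d : ℝ | ∃ x ∈ A, ∃ y ∈ B, d = dist x y}.Finite :=
  (Set.finite_range fun p : X × X ↦ dist p.1 p.2).subset fun _ ⟨x, _, y, _, hd⟩ ↦ ⟨(x, y), hd.symm⟩

lemma spacing_le {A B : Set X} {x y : X} (hx : x ∈ A) (hy : y ∈ B) :
    spacing dist A B ≤ dist x y :=
  csInf_le (spacing_set_finite dist A B).bddBelow ⟨x, hx, y, hy, rfl⟩

lemma exists_spacing_eq {A B : Set X} (hA : A.Nonempty) (hB : B.Nonempty) :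
    ∃ x ∈ A, ∃ y ∈ B, spacing dist A B = dist x y := by
  obtain ⟨x, hx⟩ := hA
  obtain ⟨y, hy⟩ := hB
  have hne : {d | ∃ x ∈ A, ∃ y ∈ B, d = dist x y}.Nonempty := ⟨dist x y, x, hx, y, hy, rfl⟩
  exact hne.csInf_mem (spacing_set_finite dist A B)

lemma spacing_le_spacing {A B A' B' : Set X} (hA : A.Nonempty) (hB : B.Nonempty) (hAA' : A ⊆ A')
    (hBB' : B ⊆ B') : spacing dist A' B' ≤ spacing dist A B := by
  obtain ⟨x, hx, y, hy, h⟩ := exists_spacing_eq dist hA hB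
  exact h ▸ spacing_le dist (hAA' hx) (hBB' hy)

lemma spacing_union_left_eq_or {A B C : Set X} (hA : A.Nonempty) (hB : B.Nonempty)
    (hC : C.Nonempty) :
    spacing dist (A ∪ B) C = spacing dist A C ∨ spacing dist (A ∪ B) C = spacing dist B C := by
  obtain ⟨x, hx | hx, y, hy, h⟩ := exists_spacing_eq dist (hA.mono Set.subset_union_left) hC
  · exact .inl <| (spacing_le_spacing dist hA hC Set.subset_union_left le_rfl).antisymm
      (h ▸ spacing_le dist hx hy)
  · exact .inr <| (spacing_le_spacing dist hB hC Set.subset_union_right le_rfl).antisymm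
      (h ▸ spacing_le dist hx hy)

lemma minSp_le_spacing {𝒞 : Set (Set X)} {A B : Set X} (hA : A ∈ 𝒞) (hB : B ∈ 𝒞) (hAB : A ≠ B) :
    MinSp dist 𝒞 ≤ spacing dist A B := by
  have hfin : {d | ∃ A ∈ 𝒞, ∃ B ∈ 𝒞, A ≠ B ∧ d = spacing dist A B}.Finite :=
    (Set.finite_range fun p : Set X × Set X ↦ spacing dist p.1 p.2).subset
      fun _ ⟨A, _, B, _, _, hd⟩ ↦ ⟨(A, B), hd.symm⟩
  exact csInf_le hfin.bddBelow ⟨A, hA, B, hB, hAB, rfl⟩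

end Finite

namespace IsClustering

variable {𝒞 : Set (Set X)} {A B : Set X}

lemma eq_of_mem_of_mem (h𝒞 : IsClustering 𝒞) (hA : A ∈ 𝒞) (hB : B ∈ 𝒞) {x : X} (hxA : x ∈ A)
    (hxB : x ∈ B) : A = B :=
  by_contra fun hAB ↦ Set.disjoint_left.1 (h𝒞.2.2 A hA B hB hAB) hxA hxB

lemma union_notMem (h𝒞 : IsClustering 𝒞) (hA : A ∈ 𝒞) (hB : B ∈ 𝒞) (hAB : A ≠ B) :
    A ∪ B ∉ 𝒞 := fun h ↦ by
  obtain ⟨x, hx⟩ := h𝒞.1 A hA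
  obtain ⟨y, hy⟩ := h𝒞.1 B hB
  exact hAB ((h𝒞.eq_of_mem_of_mem h hA (.inl hx) hx).symm.trans
    (h𝒞.eq_of_mem_of_mem h hB (.inr hy) hy))

variable [Finite X] {dist : X → X → ℝ}

lemma spacing_lt_of_eq_minSp (h𝒞 : IsClustering 𝒞)
    (hdistinct : ∀ x y x' y' : X, x ≠ y → x' ≠ y' → dist x y = dist x' y' →
      (x = x' ∧ y = y') ∨ (x = y' ∧ y = x'))
    (hA : A ∈ 𝒞) (hB : B ∈ 𝒞) (hAB : A ≠ B) (hmin : spacing dist A B = MinSp dist 𝒞)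
    {D : Set X} (hD : D ∈ 𝒞) (hDA : D ≠ A) (hDB : D ≠ B) :
    spacing dist A B < spacing dist A D := by
  refine (hmin ▸ minSp_le_spacing dist hA hD hDA.symm).lt_of_ne fun h ↦ ?_
  have hne : ∀ {C}, C ∈ 𝒞 → A ≠ C → ∀ {u v}, u ∈ A → v ∈ C → u ≠ v :=
    fun hC hAC _ _ hu hv huv ↦ hAC (h𝒞.eq_of_mem_of_mem hA hC hu (huv ▸ hv))
  obtain ⟨x, hx, y, hy, hxy⟩ := exists_spacing_eq dist (h𝒞.1 A hA) (h𝒞.1 B hB)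
  obtain ⟨x', hx', y', hy', hxy'⟩ := exists_spacing_eq dist (h𝒞.1 A hA) (h𝒞.1 D hD)
  rcases hdistinct x y x' y' (hne hB hAB hx hy) (hne hD hDA.symm hx' hy') (hxy ▸ hxy' ▸ h)
    with ⟨-, rfl⟩ | ⟨rfl, -⟩
  · exact hDB (h𝒞.eq_of_mem_of_mem hD hB hy' hy)
  · exact hDA (h𝒞.eq_of_mem_of_mem hD hA hy' hx)

end IsClustering

section Merge

variable {𝒞 : Set (Set X)} {A B : Set X}

noncomputable def mergeMap (𝒞 : Set (Set X)) (A B : Set X) (C : {C : Set X // C ∈ 𝒞}) :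
    {C : Set X // C ∈ insert (A ∪ B) (𝒞 \ {A, B})} :=
  if h : C.1 = A ∨ C.1 = B then ⟨A ∪ B, Set.mem_insert _ _⟩
  else ⟨C.1, Set.mem_insert_of_mem _ ⟨C.2, by simpa [not_or] using h⟩⟩

lemma val_mergeMap (C : {C : Set X // C ∈ 𝒞}) :
    (mergeMap 𝒞 A B C).1 = if C.1 = A ∨ C.1 = B then A ∪ B else C.1 := by
  unfold mergeMap
  split_ifs <;> rfl

lemma subset_val_mergeMap (C : {C : Set X // C ∈ 𝒞}) : C.1 ⊆ (mergeMap 𝒞 A B C).1 := by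
  rw [val_mergeMap]
  split_ifs with h
  · rcases h with h | h <;> simp [h]
  · rfl

lemma exists_mergeMap_eq_of_val_ne (y : {C : Set X // C ∈ insert (A ∪ B) (𝒞 \ {A, B})})
    (hy : y.1 ≠ A ∪ B) : ∃ v : {C : Set X // C ∈ 𝒞}, mergeMap 𝒞 A B v = y ∧ v.1 = y.1 := by
  obtain ⟨hy𝒞, hyAB⟩ := (Set.mem_insert_iff.1 y.2).resolve_left hy
  refine ⟨⟨y.1, hy𝒞⟩, Subtype.ext ?_, rfl⟩
  rw [val_mergeMap, if_neg (by simpa using hyAB)]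

lemma IsClustering.isEdgeContraction_mergeMap (h𝒞 : IsClustering 𝒞) (hA : A ∈ 𝒞) (hB : B ∈ 𝒞)
    (hAB : A ≠ B) : IsEdgeContraction (mergeMap 𝒞 A B) ⟨A, hA⟩ ⟨B, hB⟩ where
  ne h := hAB (congrArg Subtype.val h)
  apply_eq := Subtype.ext (by simp [val_mergeMap])
  surjective y := by
    by_cases hy : y.1 = A ∪ B
    · exact ⟨⟨A, hA⟩, Subtype.ext (by simp [val_mergeMap, hy])⟩
    · exact (exists_mergeMap_eq_of_val_ne y hy).imp fun _ ↦ And.left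
  eq_or_eq_of_apply_eq u v h := by
    have hval := congrArg Subtype.val h
    simp only [val_mergeMap] at hval
    split_ifs at hval with hu hv hv
    · rcases hu with hu | hu <;> rcases hv with hv | hv <;>
        simp [Subtype.ext_iff, hu, hv]
    · exact (h𝒞.union_notMem hA hB hAB (hval ▸ v.2)).elim
    · exact (h𝒞.union_notMem hA hB hAB (hval ▸ u.2)).elim
    · exact .inl (Subtype.ext hval)

variable [Finite X] {dist : X → X → ℝ}

lemma IsClustering.edgeWeight_mergeMap_le (h𝒞 : IsClustering 𝒞)
    (hsymm : ∀ x y, dist x y = dist y x) (u v : {C : Set X // C ∈ 𝒞}) :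
    edgeWeight dist s((mergeMap 𝒞 A B u).1, (mergeMap 𝒞 A B v).1) ≤
      edgeWeight dist s(u.1, v.1) := by
  rw [edgeWeight_mk dist hsymm, edgeWeight_mk dist hsymm]
  exact spacing_le_spacing dist (h𝒞.1 _ u.2) (h𝒞.1 _ v.2) (subset_val_mergeMap u)
    (subset_val_mergeMap v)

lemma IsClustering.exists_mergeMap_edgeWeight_eq (h𝒞 : IsClustering 𝒞)
    (hsymm : ∀ x y, dist x y = dist y x) (hA : A ∈ 𝒞) (hB : B ∈ 𝒞)
    (x y : {C : Set X // C ∈ insert (A ∪ B) (𝒞 \ {A, B})}) (hxy : x ≠ y) :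
    ∃ u v, mergeMap 𝒞 A B u = x ∧ mergeMap 𝒞 A B v = y ∧
      edgeWeight dist s(u.1, v.1) = edgeWeight dist s(x.1, y.1) := by
  wlog hy : y.1 ≠ A ∪ B generalizing x y
  · have hx : x.1 ≠ A ∪ B := fun hx ↦ hxy (Subtype.ext (hx.trans (not_not.1 hy).symm))
    obtain ⟨u, v, hu, hv, h⟩ := this y x hxy.symm hx
    exact ⟨v, u, hv, hu, by rw [Sym2.eq_swap, h, Sym2.eq_swap]⟩
  obtain ⟨v, hv, hvy⟩ := exists_mergeMap_eq_of_val_ne y hy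
  simp only [edgeWeight_mk dist hsymm, ← hvy]
  by_cases hx : x.1 = A ∪ B
  · rcases spacing_union_left_eq_or dist (h𝒞.1 A hA) (h𝒞.1 B hB) (h𝒞.1 _ v.2) with h | h
    · exact ⟨⟨A, hA⟩, v, Subtype.ext (by simp [val_mergeMap, hx]), hv, by rw [hx, h]⟩
    · exact ⟨⟨B, hB⟩, v, Subtype.ext (by simp [val_mergeMap, hx]), hv, by rw [hx, h]⟩
  · obtain ⟨u, hu, hux⟩ := exists_mergeMap_eq_of_val_ne x hx
    exact ⟨u, v, hu, hv, by rw [hux]⟩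

end Merge

theorem contraction_of_min_edge_is_mst_general {X : Type*} [Fintype X] (dist : X → X → ℝ)
    (hsymm : ∀ x y : X, dist x y = dist y x)
    (hdistinct : ∀ x y x' y' : X, x ≠ y → x' ≠ y' → dist x y = dist x' y' →
      (x = x' ∧ y = y') ∨ (x = y' ∧ y = x'))
    (𝒞' : Set (Set X)) (h𝒞' : IsClustering 𝒞')
    (T' : SimpleGraph {A : Set X // A ∈ 𝒞'}) (hT' : IsMST dist 𝒞' T')
    (Ci Cj : Set X) (hCi : Ci ∈ 𝒞') (hCj : Cj ∈ 𝒞') (hij : Ci ≠ Cj)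
    (hmin : spacing dist Ci Cj = MinSp dist 𝒞')
    (𝒞a : Set (Set X)) (h𝒞a : 𝒞a = insert (Ci ∪ Cj) (𝒞' \ {Ci, Cj}))
    (Ta : SimpleGraph {A : Set X // A ∈ 𝒞a})
    (hTa : ∀ u v : {A : Set X // A ∈ 𝒞a}, Ta.Adj u v ↔ u ≠ v ∧
      ∃ u' v' : {A : Set X // A ∈ 𝒞'}, T'.Adj u' v' ∧
        (if u'.val = Ci ∨ u'.val = Cj then Ci ∪ Cj else u'.val) = u.val ∧
        (if v'.val = Ci ∨ v'.val = Cj then Ci ∪ Cj else v'.val) = v.val) :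
    IsMST dist 𝒞a Ta := by
  subst h𝒞a
  have hTa_eq : Ta = fromEdgeSet (Sym2.map (mergeMap 𝒞' Ci Cj) '' T'.edgeSet) := by
    ext u v
    simp only [hTa, fromEdgeSet_adj, mk_mem_image_map_edgeSet, Subtype.ext_iff, val_mergeMap,
      and_comm]
  have hφ := h𝒞'.isEdgeContraction_mergeMap hCi hCj hij
  rw [isMST_iff] at hT' ⊢
  have hadj : T'.Adj ⟨Ci, hCi⟩ ⟨Cj, hCj⟩ := hT'.adj_of_forall_lt hφ.ne fun D hDi hDj ↦ by
    simpa only [Sym2.map_mk, edgeWeight_mk dist hsymm] using h𝒞'.spacing_lt_of_eq_minSp hdistinct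
      hCi hCj hij hmin D.2 (fun h ↦ hDi (Subtype.ext h)) (fun h ↦ hDj (Subtype.ext h))
  rw [hTa_eq]
  exact hT'.fromEdgeSet_image hφ hadj (fun u v _ ↦ h𝒞'.edgeWeight_mergeMap_le hsymm u v)
    (h𝒞'.exists_mergeMap_edgeWeight_eq hsymm hCi hCj)

theorem contraction_of_min_edge_is_mst {X : Type*} [Fintype X] (dist : X → X → ℝ)
    (hsymm : ∀ x y : X, dist x y = dist y x)
    (hpos : ∀ x y : X, x ≠ y → 0 < dist x y)
    (hdistinct : ∀ x y x' y' : X, x ≠ y → x' ≠ y' → dist x y = dist x' y' →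
      (x = x' ∧ y = y') ∨ (x = y' ∧ y = x'))
    (𝒞' : Set (Set X)) (h𝒞' : IsClustering 𝒞') (h𝒞'card : 3 ≤ 𝒞'.ncard)
    (T' : SimpleGraph {A : Set X // A ∈ 𝒞'}) (hT' : IsMST dist 𝒞' T')
    (Ci Cj : Set X) (hCi : Ci ∈ 𝒞') (hCj : Cj ∈ 𝒞') (hij : Ci ≠ Cj)
    (hmin : spacing dist Ci Cj = MinSp dist 𝒞')
    (𝒞a : Set (Set X)) (h𝒞a : 𝒞a = insert (Ci ∪ Cj) (𝒞' \ {Ci, Cj}))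
    (Ta : SimpleGraph {A : Set X // A ∈ 𝒞a})
    (hTa : ∀ u v : {A : Set X // A ∈ 𝒞a}, Ta.Adj u v ↔ u ≠ v ∧
      ∃ u' v' : {A : Set X // A ∈ 𝒞'}, T'.Adj u' v' ∧
        (if u'.val = Ci ∨ u'.val = Cj then Ci ∪ Cj else u'.val) = u.val ∧
        (if v'.val = Ci ∨ v'.val = Cj then Ci ∪ Cj else v'.val) = v.val) :
    IsMST dist 𝒞a Ta :=
  contraction_of_min_edge_is_mst_general dist hsymm hdistinct 𝒞' h𝒞' T' hT' Ci Cj hCi hCj hij hmin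
    𝒞a h𝒞a Ta hTa

end ClusterSpacing
end

section
/- Let k, L, t be integers with 2 ≤ k ≤ n, L ≥ 1 and 0 ≤ t ≤ n−k. Let D_1, …, D_{n−t} be the groups present after t merging steps of the single-linkage algorithm on (X, dist), and let D'_1, …, D'_{n−t−1} be the groups present after t+1 merging steps. Suppose that the groups D'_1, …, D'_{n−t−1} cannot be merged into a k-clustering in which every group has at least L points, i.e., there is no partition of {D'_1, …, D'_{n−t−1}} into k nonempty families such that the union of each family contains at least L points. Then every k-clustering A of X whose groups are unions of the groups D_1, …, D_{n−t} satisfies Min-Sp(A) ≥ Min-Sp(C*) for every (k, L)-clustering C* of X. -/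
open scoped Classical

namespace ClusterSpacing

variable {X : Type*}

/-!
Distinct distances make single linkage deterministic, so `𝒟'` is `𝒟` with its two closest
groups `A, B` merged; let `w` be their spacing. Any two groups of `𝒟` are at spacing at least `w`,
hence so are any two groups of a coarsening `𝒜` of `𝒟`, i.e. `w ≤ Min-Sp 𝒜`.

Call a set `w`-linked if any two of its points are joined by a chain of steps of length at most
`w`. By induction along the algorithm, every current group is linked at the level of any spacing
between two current groups; in particular every group of `𝒟'` is `w`-linked. If each group of
`𝒟'` lay inside a cluster of `𝒞*`, grouping the groups of `𝒟'` by these clusters would be a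
partition excluded by hypothesis. So `𝒞*` splits some group of `𝒟'`, and a `w`-chain inside it
steps between two clusters of `𝒞*`, whence `Min-Sp 𝒞* ≤ w`.
-/

lemma finite_setOf_eq_dist [Finite X] (dist : X → X → ℝ) (A B : Set X) :
    {d : ℝ | ∃ x ∈ A, ∃ y ∈ B, d = dist x y}.Finite :=
  (Set.finite_range fun p : X × X => dist p.1 p.2).subset <| by
    rintro d ⟨a, -, b, -, rfl⟩
    exact ⟨(a, b), rfl⟩

lemma spacing_le_dist [Finite X] (dist : X → X → ℝ) {A B : Set X} {x y : X}
    (hx : x ∈ A) (hy : y ∈ B) : spacing dist A B ≤ dist x y :=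
  csInf_le (finite_setOf_eq_dist dist A B).bddBelow ⟨x, hx, y, hy, rfl⟩

lemma exists_dist_eq_spacing [Finite X] (dist : X → X → ℝ) {A B : Set X}
    (hA : A.Nonempty) (hB : B.Nonempty) : ∃ x ∈ A, ∃ y ∈ B, dist x y = spacing dist A B := by
  obtain ⟨a, ha⟩ := hA
  obtain ⟨b, hb⟩ := hB
  obtain ⟨x, hx, y, hy, h⟩ :=
    Set.Nonempty.csInf_mem (s := {d : ℝ | ∃ x ∈ A, ∃ y ∈ B, d = dist x y})
      ⟨dist a b, a, ha, b, hb, rfl⟩ (finite_setOf_eq_dist dist A B)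
  exact ⟨x, hx, y, hy, h.symm⟩

lemma minSp_le_spacing_s6 [Finite X] (dist : X → X → ℝ) {𝒞 : Set (Set X)} {C C' : Set X}
    (hC : C ∈ 𝒞) (hC' : C' ∈ 𝒞) (hne : C ≠ C') : MinSp dist 𝒞 ≤ spacing dist C C' := by
  have hfin : {d : ℝ | ∃ A ∈ 𝒞, ∃ B ∈ 𝒞, A ≠ B ∧ d = spacing dist A B}.Finite :=
    (Set.finite_range fun p : Set X × Set X => spacing dist p.1 p.2).subset <| by
      rintro _ ⟨A, -, B, -, -, rfl⟩
      exact ⟨(A, B), rfl⟩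
  exact csInf_le hfin.bddBelow ⟨C, hC, C', hC', hne, rfl⟩

lemma le_minSp {dist : X → X → ℝ} {𝒞 : Set (Set X)} {w : ℝ} (h𝒞 : 1 < 𝒞.ncard)
    (hw : ∀ C ∈ 𝒞, ∀ C' ∈ 𝒞, C ≠ C' → w ≤ spacing dist C C') : w ≤ MinSp dist 𝒞 := by
  obtain ⟨C, hC, C', hC', hne⟩ := (Set.one_lt_ncard_iff_nontrivial_and_finite.mp h𝒞).1
  refine le_csInf ⟨_, C, hC, C', hC', hne, rfl⟩ ?_
  rintro _ ⟨C, hC, C', hC', hne, rfl⟩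
  exact hw C hC C' hC' hne

lemma le_spacing_sUnion [Finite X] {dist : X → X → ℝ} {𝒟 S S' : Set (Set X)} {w : ℝ}
    (hw : ∀ D ∈ 𝒟, ∀ D' ∈ 𝒟, D ≠ D' → w ≤ spacing dist D D') (hS : S ⊆ 𝒟) (hS' : S' ⊆ 𝒟)
    (hne : (⋃₀ S).Nonempty) (hne' : (⋃₀ S').Nonempty) (hdisj : Disjoint (⋃₀ S) (⋃₀ S')) :
    w ≤ spacing dist (⋃₀ S) (⋃₀ S') := by
  obtain ⟨x, ⟨D, hD, hxD⟩, y, ⟨D', hD', hyD'⟩, hxy⟩ := exists_dist_eq_spacing dist hne hne'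
  have hDD' : D ≠ D' := by
    rintro rfl
    exact Set.disjoint_left.mp hdisj ⟨D, hD, hxD⟩ ⟨D, hD', hxD⟩
  calc w ≤ spacing dist D D' := hw D (hS hD) D' (hS' hD') hDD'
    _ ≤ dist x y := spacing_le_dist dist hxD hyD'
    _ = _ := hxy

lemma le_minSp_of_forall_eq_sUnion [Finite X] {dist : X → X → ℝ} {𝒜 𝒟 : Set (Set X)} {w : ℝ}
    (h𝒜 : IsClustering 𝒜) (h𝒜card : 1 < 𝒜.ncard) (hunion : ∀ A ∈ 𝒜, ∃ S ⊆ 𝒟, A = ⋃₀ S)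
    (hw : ∀ D ∈ 𝒟, ∀ D' ∈ 𝒟, D ≠ D' → w ≤ spacing dist D D') : w ≤ MinSp dist 𝒜 := by
  refine le_minSp h𝒜card fun C hC C' hC' hne => ?_
  obtain ⟨S, hS, rfl⟩ := hunion C hC
  obtain ⟨S', hS', rfl⟩ := hunion C' hC'
  exact le_spacing_sUnion hw hS hS' (h𝒜.1 _ hC) (h𝒜.1 _ hC') (h𝒜.2.2 _ hC _ hC' hne)

def merge (𝒟 : Set (Set X)) (A B : Set X) : Set (Set X) :=
  insert (A ∪ B) (𝒟 \ {A, B})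

lemma exists_subset_eq_sUnion_of_mem_merge {𝒟 : Set (Set X)} {A B C : Set X}
    (hA : A ∈ 𝒟) (hB : B ∈ 𝒟) (hC : C ∈ merge 𝒟 A B) : ∃ S ⊆ 𝒟, C = ⋃₀ S := by
  rcases hC with rfl | ⟨hC, -⟩
  · exact ⟨{A, B}, Set.pair_subset hA hB, (Set.sUnion_pair A B).symm⟩
  · exact ⟨{C}, Set.singleton_subset_iff.mpr hC, (Set.sUnion_singleton C).symm⟩

namespace IsClustering

variable {𝒞 : Set (Set X)}

lemma exists_mem (h : IsClustering 𝒞) (x : X) : ∃ C ∈ 𝒞, x ∈ C :=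
  (h.2.1 ▸ Set.mem_univ x : x ∈ ⋃₀ 𝒞)

lemma eq_of_mem_of_mem_s6 (h : IsClustering 𝒞) {C C' : Set X} {x : X}
    (hC : C ∈ 𝒞) (hC' : C' ∈ 𝒞) (hx : x ∈ C) (hx' : x ∈ C') : C = C' :=
  by_contra fun hne => Set.disjoint_left.mp (h.2.2 C hC C' hC' hne) hx hx'

lemma merge (h : IsClustering 𝒞) {A B : Set X} (hA : A ∈ 𝒞) (hB : B ∈ 𝒞) (hAB : A ≠ B) :
    IsClustering (ClusterSpacing.merge 𝒞 A B) := by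
  have hdisj : ∀ C ∈ 𝒞 \ {A, B}, Disjoint (A ∪ B) C := by
    rintro C ⟨hC, hCAB⟩
    simp only [Set.mem_insert_iff, Set.mem_singleton_iff, not_or] at hCAB
    exact Disjoint.union_left (h.2.2 A hA C hC (Ne.symm hCAB.1)) (h.2.2 B hB C hC (Ne.symm hCAB.2))
  refine ⟨?_, Set.eq_univ_of_forall fun x => ?_, ?_⟩
  · rintro C (rfl | ⟨hC, -⟩)
    · exact (h.1 A hA).mono Set.subset_union_left
    · exact h.1 C hC
  · obtain ⟨C, hC, hxC⟩ := h.exists_mem x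
    by_cases hCAB : C ∈ ({A, B} : Set (Set X))
    · refine ⟨A ∪ B, Set.mem_insert _ _, ?_⟩
      rcases hCAB with rfl | rfl
      exacts [Or.inl hxC, Or.inr hxC]
    · exact ⟨C, Set.mem_insert_of_mem _ ⟨hC, hCAB⟩, hxC⟩
  · rintro C (rfl | hC) C' (rfl | hC') hne
    · exact absurd rfl hne
    · exact hdisj C' hC'
    · exact (hdisj C hC).symm
    · exact h.2.2 C hC.1 C' hC'.1 hne

lemma eq_and_eq_or_of_spacing_eq [Finite X] {dist : X → X → ℝ}
    (hdistinct : ∀ x y x' y' : X, x ≠ y → x' ≠ y' → dist x y = dist x' y' →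
      (x = x' ∧ y = y') ∨ (x = y' ∧ y = x'))
    (h : IsClustering 𝒞) {A B A' B' : Set X} (hA : A ∈ 𝒞) (hB : B ∈ 𝒞) (hAB : A ≠ B)
    (hA' : A' ∈ 𝒞) (hB' : B' ∈ 𝒞) (hAB' : A' ≠ B')
    (heq : spacing dist A B = spacing dist A' B') : (A = A' ∧ B = B') ∨ (A = B' ∧ B = A') := by
  obtain ⟨x, hx, y, hy, hxy⟩ := exists_dist_eq_spacing dist (h.1 A hA) (h.1 B hB)
  obtain ⟨x', hx', y', hy', hxy'⟩ := exists_dist_eq_spacing dist (h.1 A' hA') (h.1 B' hB')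
  have hne : x ≠ y := fun hxy => Set.disjoint_left.mp (h.2.2 A hA B hB hAB) hx (hxy ▸ hy)
  have hne' : x' ≠ y' := fun hxy => Set.disjoint_left.mp (h.2.2 A' hA' B' hB' hAB') hx' (hxy ▸ hy')
  rcases hdistinct x y x' y' hne hne' (by rw [hxy, hxy', heq]) with ⟨rfl, rfl⟩ | ⟨rfl, rfl⟩
  · exact .inl ⟨h.eq_of_mem_of_mem_s6 hA hA' hx hx', h.eq_of_mem_of_mem_s6 hB hB' hy hy'⟩
  · exact .inr ⟨h.eq_of_mem_of_mem_s6 hA hB' hx hy', h.eq_of_mem_of_mem_s6 hB hA' hy hx'⟩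

lemma exists_grouping {𝒟 : Set (Set X)} (h : IsClustering 𝒞) (h𝒟 : IsClustering 𝒟)
    (href : ∀ D ∈ 𝒟, ∃ C ∈ 𝒞, D ⊆ C) :
    ∃ F : Set (Set (Set X)), (∀ f ∈ F, f.Nonempty) ∧ ⋃₀ F = 𝒟 ∧
      (∀ f ∈ F, ∀ g ∈ F, f ≠ g → Disjoint f g) ∧ F.ncard = 𝒞.ncard ∧ ∀ f ∈ F, ⋃₀ f ∈ 𝒞 := by
  set g : Set X → Set (Set X) := fun C => {D ∈ 𝒟 | D ⊆ C}
  have hg : ∀ C ∈ 𝒞, ⋃₀ g C = C := by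
    intro C hC
    refine subset_antisymm (Set.sUnion_subset fun D hD => hD.2) fun x hx => ?_
    obtain ⟨D, hD, hxD⟩ := h𝒟.exists_mem x
    obtain ⟨C', hC', hDC'⟩ := href D hD
    obtain rfl := h.eq_of_mem_of_mem_s6 hC hC' hx (hDC' hxD)
    exact ⟨D, ⟨hD, hDC'⟩, hxD⟩
  refine ⟨g '' 𝒞, ?_, ?_, ?_, Set.InjOn.ncard_image fun C hC C' hC' hCC' => ?_, ?_⟩
  · rintro _ ⟨C, hC, rfl⟩
    obtain ⟨x, hx⟩ := h.1 C hC
    obtain ⟨D, hD, -⟩ := (hg C hC).symm ▸ hx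
    exact ⟨D, hD⟩
  · refine subset_antisymm (Set.sUnion_subset ?_) fun D hD => ?_
    · rintro _ ⟨C, -, rfl⟩ D hD
      exact hD.1
    · obtain ⟨C, hC, hDC⟩ := href D hD
      exact ⟨g C, ⟨C, hC, rfl⟩, hD, hDC⟩
  · rintro _ ⟨C, hC, rfl⟩ _ ⟨C', hC', rfl⟩ hne
    refine Set.disjoint_left.mpr fun D hD hD' => ?_
    obtain ⟨x, hx⟩ := h𝒟.1 D hD.1
    exact hne (congrArg g (h.eq_of_mem_of_mem_s6 hC hC' (hD.2 hx) (hD'.2 hx)))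
  · rw [← hg C hC, ← hg C' hC', hCC']
  · rintro _ ⟨C, hC, rfl⟩
    rwa [hg C hC]

lemma minSp_le_of_reflTransGen [Finite X] {dist : X → X → ℝ} (h : IsClustering 𝒞) {w : ℝ}
    {x y : X} (hxy : Relation.ReflTransGen (fun a b => dist a b ≤ w) x y) {C C' : Set X}
    (hC : C ∈ 𝒞) (hC' : C' ∈ 𝒞) (hx : x ∈ C) (hy : y ∈ C') (hne : C ≠ C') :
    MinSp dist 𝒞 ≤ w := by
  induction hxy generalizing C' with
  | refl => exact absurd (h.eq_of_mem_of_mem_s6 hC hC' hx hy) hne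
  | @tail b c _ hbc ih =>
    obtain ⟨Cb, hCb, hb⟩ := h.exists_mem b
    by_cases hCbC' : Cb = C'
    · subst hCbC'
      exact ih hCb hb hne
    · calc MinSp dist 𝒞 ≤ spacing dist Cb C' := minSp_le_spacing_s6 dist hCb hC' hCbC'
        _ ≤ dist b c := spacing_le_dist dist hb hy
        _ ≤ w := hbc

end IsClustering

def IsLinked (dist : X → X → ℝ) (w : ℝ) (D : Set X) : Prop :=
  ∀ x ∈ D, ∀ y ∈ D, Relation.ReflTransGen (fun a b => dist a b ≤ w) x y

namespace IsLinked

variable {dist : X → X → ℝ} {w : ℝ}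

lemma singleton (x : X) : IsLinked dist w {x} := by
  rintro _ rfl _ rfl
  exact .refl

lemma mono {w' : ℝ} {D : Set X} (h : IsLinked dist w D) (hw : w ≤ w') : IsLinked dist w' D :=
  fun x hx y hy =>
    Relation.ReflTransGen.mono (fun _ _ (hab : dist _ _ ≤ w) => hab.trans hw) x y (h x hx y hy)

lemma union (hsymm : ∀ x y : X, dist x y = dist y x) {A B : Set X} {a b : X}
    (hA : IsLinked dist w A) (hB : IsLinked dist w B) (ha : a ∈ A) (hb : b ∈ B)
    (hab : dist a b ≤ w) : IsLinked dist w (A ∪ B) := by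
  have hba : dist b a ≤ w := by rwa [hsymm]
  rintro x (hx | hx) y (hy | hy)
  · exact hA x hx y hy
  · exact (hA x hx a ha).trans (.head hab (hB b hb y hy))
  · exact (hB x hx b hb).trans (.head hba (hA a ha y hy))
  · exact hB x hx y hy

end IsLinked

lemma IsClustering.minSp_le_of_isLinked [Finite X] {dist : X → X → ℝ} {𝒞 : Set (Set X)}
    (h : IsClustering 𝒞) {w : ℝ} {D : Set X} (hD : IsLinked dist w D) (hDne : D.Nonempty)
    (hsplit : ∀ C ∈ 𝒞, ¬ D ⊆ C) : MinSp dist 𝒞 ≤ w := by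
  obtain ⟨x, hx⟩ := hDne
  obtain ⟨C, hC, hxC⟩ := h.exists_mem x
  obtain ⟨y, hy, hyC⟩ := Set.not_subset.mp (hsplit C hC)
  obtain ⟨C', hC', hyC'⟩ := h.exists_mem y
  exact h.minSp_le_of_reflTransGen (hD x hx y hy) hC hC' hxC hyC' fun hCC' => hyC (hCC' ▸ hyC')

lemma isLinked_of_mem_merge [Finite X] {dist : X → X → ℝ} (hsymm : ∀ x y : X, dist x y = dist y x)
    {𝒟 : Set (Set X)} {A B D : Set X} (hA : A.Nonempty) (hB : B.Nonempty)
    (h𝒟 : ∀ D ∈ 𝒟, IsLinked dist (spacing dist A B) D) (hA𝒟 : A ∈ 𝒟) (hB𝒟 : B ∈ 𝒟)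
    (hD : D ∈ merge 𝒟 A B) : IsLinked dist (spacing dist A B) D := by
  rcases hD with rfl | ⟨hD, -⟩
  · obtain ⟨a, ha, b, hb, hab⟩ := exists_dist_eq_spacing dist hA hB
    exact (h𝒟 A hA𝒟).union hsymm (h𝒟 B hB𝒟) ha hb hab.le
  · exact h𝒟 D hD

namespace SingleLinkage

variable {dist : X → X → ℝ}

lemma isClustering {s : ℕ} {𝒟 : Set (Set X)} (h : SingleLinkage dist s 𝒟) : IsClustering 𝒟 := by
  induction h with
  | zero =>
    refine ⟨?_, Set.eq_univ_of_forall fun x => ⟨{x}, ⟨x, rfl⟩, rfl⟩, ?_⟩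
    · rintro _ ⟨x, rfl⟩
      exact Set.singleton_nonempty x
    · rintro _ ⟨x, rfl⟩ _ ⟨y, rfl⟩ hne
      exact Set.disjoint_singleton.mpr fun hxy => hne (hxy ▸ rfl)
  | succ _ _ _ _ _ hA hB hAB _ ih => exact ih.merge hA hB hAB

lemma unique [Finite X]
    (hdistinct : ∀ x y x' y' : X, x ≠ y → x' ≠ y' → dist x y = dist x' y' →
      (x = x' ∧ y = y') ∨ (x = y' ∧ y = x'))
    {s : ℕ} {𝒟₁ 𝒟₂ : Set (Set X)} (h₁ : SingleLinkage dist s 𝒟₁)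
    (h₂ : SingleLinkage dist s 𝒟₂) : 𝒟₁ = 𝒟₂ := by
  induction s generalizing 𝒟₁ 𝒟₂ with
  | zero =>
    cases h₁; cases h₂; rfl
  | succ s ih =>
    obtain _ | ⟨_, 𝒟, A, B, h, hA, hB, hAB, hmin⟩ := h₁
    obtain _ | ⟨_, 𝒟', A', B', h', hA', hB', hAB', hmin'⟩ := h₂
    obtain rfl := ih h h'
    have heq := le_antisymm (hmin A' hA' B' hB' hAB') (hmin' A hA B hB hAB)
    rcases h.isClustering.eq_and_eq_or_of_spacing_eq hdistinct hA hB hAB hA' hB' hAB' heq with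
      ⟨rfl, rfl⟩ | ⟨rfl, rfl⟩
    · rfl
    · rw [Set.union_comm, Set.pair_comm]

lemma isLinked [Finite X] (hsymm : ∀ x y : X, dist x y = dist y x) {s : ℕ} {𝒟 : Set (Set X)}
    (h : SingleLinkage dist s 𝒟) :
    ∀ C ∈ 𝒟, ∀ C' ∈ 𝒟, C ≠ C' → ∀ D ∈ 𝒟, IsLinked dist (spacing dist C C') D := by
  induction h with
  | zero =>
    rintro - - - - - D ⟨x, rfl⟩
    exact .singleton x
  | succ _ 𝒟 A B h hA hB hAB hmin ih =>
    intro C hC C' hC' hne D hD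
    have h𝒟 := h.isClustering
    have hmerge := h𝒟.merge hA hB hAB
    have hle : spacing dist A B ≤ spacing dist C C' := by
      obtain ⟨S, hS, rfl⟩ := exists_subset_eq_sUnion_of_mem_merge hA hB hC
      obtain ⟨S', hS', rfl⟩ := exists_subset_eq_sUnion_of_mem_merge hA hB hC'
      exact le_spacing_sUnion hmin hS hS' (hmerge.1 _ hC) (hmerge.1 _ hC')
        (hmerge.2.2 _ hC _ hC' hne)
    exact (isLinked_of_mem_merge hsymm (h𝒟.1 A hA) (h𝒟.1 B hB) (ih A hA B hB hAB) hA hB hD).mono hle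

end SingleLinkage

theorem minSp_of_coarsening_ge_constrained_opt_general {X : Type*} [Fintype X] (dist : X → X → ℝ)
    (hsymm : ∀ x y : X, dist x y = dist y x)
    (hdistinct : ∀ x y x' y' : X, x ≠ y → x' ≠ y' → dist x y = dist x' y' →
      (x = x' ∧ y = y') ∨ (x = y' ∧ y = x'))
    (k L t : ℕ) (hk : 2 ≤ k)
    (𝒟 𝒟' : Set (Set X))
    (h𝒟 : SingleLinkage dist t 𝒟) (h𝒟' : SingleLinkage dist (t + 1) 𝒟')
    (hno : ¬ ∃ F : Set (Set (Set X)),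
      (∀ f ∈ F, f.Nonempty) ∧ ⋃₀ F = 𝒟' ∧
      (∀ f ∈ F, ∀ g ∈ F, f ≠ g → Disjoint f g) ∧ F.ncard = k ∧
      ∀ f ∈ F, L ≤ (⋃₀ f).ncard)
    (𝒜 : Set (Set X)) (h𝒜 : IsClustering 𝒜) (h𝒜k : 𝒜.ncard = k)
    (hunion : ∀ A ∈ 𝒜, ∃ S ⊆ 𝒟, A = ⋃₀ S)
    (𝒞star : Set (Set X)) (h𝒞star : IsClustering 𝒞star) (h𝒞stark : 𝒞star.ncard = k)
    (h𝒞starL : ∀ C ∈ 𝒞star, L ≤ C.ncard) :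
    MinSp dist 𝒞star ≤ MinSp dist 𝒜 := by
  obtain _ | ⟨_, 𝒟₀, A, B, h𝒟₀, hA, hB, hAB, hmin⟩ := h𝒟'
  obtain rfl := h𝒟.unique hdistinct h𝒟₀
  have h𝒟cl := h𝒟.isClustering
  have hmerge := h𝒟cl.merge hA hB hAB
  obtain ⟨D, hD, hsplit⟩ : ∃ D ∈ merge 𝒟 A B, ∀ C ∈ 𝒞star, ¬ D ⊆ C := by
    by_contra! hrefines
    obtain ⟨F, hFne, hF, hFdisj, hFcard, hF𝒞⟩ := h𝒞star.exists_grouping hmerge hrefines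
    exact hno ⟨F, hFne, hF, hFdisj, hFcard.trans h𝒞stark, fun f hf => h𝒞starL _ (hF𝒞 f hf)⟩
  have hlinked : IsLinked dist (spacing dist A B) D :=
    isLinked_of_mem_merge hsymm (h𝒟cl.1 A hA) (h𝒟cl.1 B hB) (h𝒟.isLinked hsymm A hA B hB hAB)
      hA hB hD
  calc MinSp dist 𝒞star ≤ spacing dist A B :=
        h𝒞star.minSp_le_of_isLinked hlinked (hmerge.1 D hD) hsplit
    _ ≤ MinSp dist 𝒜 := le_minSp_of_forall_eq_sUnion h𝒜 (by omega) hunion hmin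

theorem minSp_of_coarsening_ge_constrained_opt {X : Type*} [Fintype X] (dist : X → X → ℝ)
    (hsymm : ∀ x y : X, dist x y = dist y x)
    (hpos : ∀ x y : X, x ≠ y → 0 < dist x y)
    (hdistinct : ∀ x y x' y' : X, x ≠ y → x' ≠ y' → dist x y = dist x' y' →
      (x = x' ∧ y = y') ∨ (x = y' ∧ y = x'))
    (k L t : ℕ) (hk : 2 ≤ k) (hkn : k ≤ Fintype.card X) (hL : 1 ≤ L)
    (ht : t ≤ Fintype.card X - k)
    (𝒟 𝒟' : Set (Set X))
    (h𝒟 : SingleLinkage dist t 𝒟) (h𝒟' : SingleLinkage dist (t + 1) 𝒟')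
    (hno : ¬ ∃ F : Set (Set (Set X)),
      (∀ f ∈ F, f.Nonempty) ∧ ⋃₀ F = 𝒟' ∧
      (∀ f ∈ F, ∀ g ∈ F, f ≠ g → Disjoint f g) ∧ F.ncard = k ∧
      ∀ f ∈ F, L ≤ (⋃₀ f).ncard)
    (𝒜 : Set (Set X)) (h𝒜 : IsClustering 𝒜) (h𝒜k : 𝒜.ncard = k)
    (hunion : ∀ A ∈ 𝒜, ∃ S ⊆ 𝒟, A = ⋃₀ S)
    (𝒞star : Set (Set X)) (h𝒞star : IsClustering 𝒞star) (h𝒞stark : 𝒞star.ncard = k)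
    (h𝒞starL : ∀ C ∈ 𝒞star, L ≤ C.ncard) :
    MinSp dist 𝒞star ≤ MinSp dist 𝒜 :=
  minSp_of_coarsening_ge_constrained_opt_general dist hsymm hdistinct k L t hk 𝒟 𝒟' h𝒟 h𝒟' hno 𝒜 h𝒜
    h𝒜k hunion 𝒞star h𝒞star h𝒞stark h𝒞starL

end ClusterSpacing
end

section
/- Let m ≥ 2 and T be positive integers and let s_1, …, s_{3m} be positive integers with Σ_{i=1}^{3m} s_i = mT and T/4 < s_i < T/2 for every i. Let α > 1/2 be a real number, let X be the disjoint union of sets X_1, …, X_{3m} with |X_i| = s_i, and define dist(x, y) = 1/2 if x and y lie in the same X_i and dist(x, y) = α otherwise. Then there exists an (m, T)-clustering C of X with MST-Sp(C) = (m−1)α if and only if the index set {1, …, 3m} can be partitioned into m triples such that, for each triple {i_1, i_2, i_3}, s_{i_1} + s_{i_2} + s_{i_3} = T. -/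
/-!
If some block `X_i` were split between two groups `A ≠ B`, the star spanning tree centred at `A`
would contain an edge of weight `1/2` and cost at most `1/2 + (m - 2) α < (m - 1) α`. So in a
clustering with MST spacing `(m - 1) α` every group is a union of blocks. The `m` groups have at
least `T` points each and `m T` points in all, hence exactly `T` each, and `T/4 < s_i < T/2` forces
a group to consist of three blocks. Conversely, the fibres of a 3-partition form an
`(m, T)`-clustering in which every edge of `G_C` has weight `α`.
-/

open scoped Classical

namespace ClusterSpacing

variable {X : Type*}

open SimpleGraph

section EdgeWeight

variable {dist : X → X → ℝ} {A B : Set X}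

lemma edgeWeight_le (h0 : ∀ x y, 0 ≤ dist x y) {x y : X} (hx : x ∈ A) (hy : y ∈ B) :
    edgeWeight dist s(A, B) ≤ dist x y :=
  csInf_le ⟨0, by rintro d (⟨x', -, y', -, rfl⟩ | ⟨x', -, y', -, rfl⟩) <;> exact h0 _ _⟩
    (Or.inl ⟨x, hx, y, hy, rfl⟩)

lemma edgeWeight_nonneg (h0 : ∀ x y, 0 ≤ dist x y) (e : Sym2 (Set X)) :
    0 ≤ edgeWeight dist e := by
  induction e using Sym2.ind with
  | _ A B =>
    apply Real.sInf_nonneg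
    rintro d (⟨x, -, y, -, rfl⟩ | ⟨x, -, y, -, rfl⟩) <;> exact h0 _ _

lemma edgeWeight_eq_of_forall {a : ℝ} (hA : A.Nonempty) (hB : B.Nonempty)
    (h : ∀ x ∈ A, ∀ y ∈ B, dist x y = a) (h' : ∀ y ∈ B, ∀ x ∈ A, dist y x = a) :
    edgeWeight dist s(A, B) = a := by
  obtain ⟨x, hx⟩ := hA
  obtain ⟨y, hy⟩ := hB
  refine IsLeast.csInf_eq ⟨Or.inl ⟨x, hx, y, hy, (h x hx y hy).symm⟩, ?_⟩
  rintro d (⟨x, hx, y, hy, rfl⟩ | ⟨y, hy, x, hx, rfl⟩)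
  · exact (h x hx y hy).ge
  · exact (h' y hy x hx).ge

end EdgeWeight

section SpanningTree

variable [Fintype X] {dist : X → X → ℝ} {𝒞 : Set (Set X)} {T : SimpleGraph {A : Set X // A ∈ 𝒞}}

lemma treeCost_eq_sum :
    treeCost dist 𝒞 T = ∑ e ∈ T.edgeFinset, edgeWeight dist (e.map Subtype.val) := by
  rw [treeCost, ← coe_edgeFinset, finsum_mem_coe_finset]

lemma card_edgeFinset_of_isTree (hT : T.IsTree) :
    (T.edgeFinset.card : ℝ) = 𝒞.ncard - 1 := by
  have h := hT.card_edgeFinset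
  rw [← Nat.card_eq_fintype_card, Nat.card_coe_set_eq] at h
  rw [← h]
  push_cast
  ring

lemma treeCost_eq_of_forall {a : ℝ} (hT : T.IsTree)
    (hw : ∀ e ∈ T.edgeSet, edgeWeight dist (e.map Subtype.val) = a) :
    treeCost dist 𝒞 T = (𝒞.ncard - 1) * a := by
  rw [treeCost_eq_sum, Finset.sum_congr rfl fun e he => hw e (mem_edgeFinset.mp he),
    Finset.sum_const, nsmul_eq_mul, card_edgeFinset_of_isTree hT]

lemma treeCost_le_of_mem_edgeSet {a : ℝ} (hT : T.IsTree)
    (hw : ∀ e ∈ T.edgeSet, edgeWeight dist (e.map Subtype.val) ≤ a)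
    {e : Sym2 {A : Set X // A ∈ 𝒞}} (he : e ∈ T.edgeSet) :
    treeCost dist 𝒞 T ≤ edgeWeight dist (e.map Subtype.val) + (𝒞.ncard - 2) * a := by
  have he' : e ∈ T.edgeFinset := mem_edgeFinset.mpr he
  have hrest := Finset.sum_le_card_nsmul (T.edgeFinset.erase e) _ a
    fun e' he' => hw e' (mem_edgeFinset.mp (Finset.mem_of_mem_erase he'))
  rw [Finset.card_erase_of_mem he', nsmul_eq_mul,
    Nat.cast_pred (Finset.card_pos.mpr ⟨e, he'⟩), card_edgeFinset_of_isTree hT]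
    at hrest
  rw [treeCost_eq_sum, ← Finset.add_sum_erase _ _ he']
  linarith

lemma MSTSp_le_treeCost (h0 : ∀ x y, 0 ≤ dist x y) (hT : T.IsTree) :
    MSTSp dist 𝒞 ≤ treeCost dist 𝒞 T := by
  refine csInf_le ⟨0, ?_⟩ ⟨T, hT, rfl⟩
  rintro _ ⟨T', -, rfl⟩
  rw [treeCost_eq_sum]
  exact Finset.sum_nonneg fun e _ => edgeWeight_nonneg h0 _

lemma MSTSp_eq_of_forall {a : ℝ} (hne : 𝒞.Nonempty)
    (hw : ∀ A ∈ 𝒞, ∀ B ∈ 𝒞, A ≠ B → edgeWeight dist s(A, B) = a) :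
    MSTSp dist 𝒞 = (𝒞.ncard - 1) * a := by
  have hcost : ∀ T : SimpleGraph {A : Set X // A ∈ 𝒞}, T.IsTree →
      treeCost dist 𝒞 T = (𝒞.ncard - 1) * a := by
    refine fun T hT => treeCost_eq_of_forall hT fun e he => ?_
    induction e using Sym2.ind with
    | _ u v => exact hw u u.2 v v.2 fun h => (T.ne_of_adj he) (Subtype.ext h)
  obtain ⟨A, hA⟩ := hne
  have hset : {c : ℝ | ∃ T : SimpleGraph {A : Set X // A ∈ 𝒞}, T.IsTree ∧
      treeCost dist 𝒞 T = c} = {(𝒞.ncard - 1 : ℝ) * a} := by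
    refine Set.eq_singleton_iff_unique_mem.mpr ⟨?_, ?_⟩
    · exact ⟨starGraph ⟨A, hA⟩, isTree_starGraph _, hcost _ (isTree_starGraph _)⟩
    · rintro _ ⟨T, hT, rfl⟩
      exact hcost T hT
  rw [MSTSp, hset, csInf_singleton]

lemma eq_of_dist_lt_of_MSTSp_eq {a : ℝ} (hne : ∀ C ∈ 𝒞, C.Nonempty)
    (h0 : ∀ x y, 0 ≤ dist x y) (hle : ∀ x y, dist x y ≤ a)
    (hmst : MSTSp dist 𝒞 = (𝒞.ncard - 1) * a) {A B : Set X} (hA : A ∈ 𝒞) (hB : B ∈ 𝒞)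
    {x y : X} (hx : x ∈ A) (hy : y ∈ B) (hxy : dist x y < a) : A = B := by
  by_contra hAB
  let c : {A : Set X // A ∈ 𝒞} := ⟨A, hA⟩
  have hw : ∀ e ∈ (starGraph c).edgeSet, edgeWeight dist (e.map Subtype.val) ≤ a := by
    rintro e -
    induction e using Sym2.ind with
    | _ u v =>
      obtain ⟨x', hx'⟩ := hne u u.2
      obtain ⟨y', hy'⟩ := hne v v.2
      exact (edgeWeight_le h0 hx' hy').trans (hle x' y')
  have hedge : s(c, ⟨B, hB⟩) ∈ (starGraph c).edgeSet :=
    starGraph_center_adj fun h => hAB (congrArg Subtype.val h)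
  have hcost := treeCost_le_of_mem_edgeSet (isTree_starGraph c) hw hedge
  have hmin := MSTSp_le_treeCost (dist := dist) h0 (isTree_starGraph c)
  have hAB' := edgeWeight_le h0 (dist := dist) hx hy
  simp only [Sym2.map_mk] at hcost
  linarith

end SpanningTree

section Clustering

variable {𝒞 : Set (Set X)}

lemma IsClustering.exists_mem_s13 (h : IsClustering 𝒞) (x : X) : ∃ A ∈ 𝒞, x ∈ A := by
  simpa using h.2.1.ge (Set.mem_univ x)

lemma IsClustering.eq_of_mem_of_mem_s13 (h : IsClustering 𝒞) {A B : Set X} (hA : A ∈ 𝒞)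
    (hB : B ∈ 𝒞) {x : X} (hxA : x ∈ A) (hxB : x ∈ B) : A = B := by
  by_contra hAB
  exact Set.disjoint_left.mp (h.2.2 A hA B hB hAB) hxA hxB

lemma IsClustering.eq_setOf (h : IsClustering 𝒞) {g : X → {A : Set X // A ∈ 𝒞}}
    (hg : ∀ x, x ∈ (g x : Set X)) (A : {A : Set X // A ∈ 𝒞}) :
    (A : Set X) = {x | g x = A} := by
  ext x
  refine ⟨fun hx => Subtype.ext (h.eq_of_mem_of_mem_s13 (g x).2 A.2 (hg x) hx), ?_⟩
  rintro rfl
  exact hg x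

variable {κ : Type*} {φ : X → κ}

lemma isClustering_range_preimage (hφ : Function.Surjective φ) :
    IsClustering (Set.range fun j => φ ⁻¹' {j}) := by
  refine ⟨?_, ?_, ?_⟩
  · rintro _ ⟨j, rfl⟩
    exact hφ.nonempty_preimage.mpr (Set.singleton_nonempty j)
  · exact Set.eq_univ_of_forall fun x => ⟨_, ⟨φ x, rfl⟩, rfl⟩
  · rintro _ ⟨j, rfl⟩ _ ⟨j', rfl⟩ hne
    exact (Set.disjoint_singleton.mpr fun h => hne (by rw [h])).preimage φ

lemma ncard_range_preimage (hφ : Function.Surjective φ) :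
    (Set.range fun j => φ ⁻¹' {j}).ncard = Nat.card κ :=
  Set.ncard_range_of_injective
    ((Set.preimage_injective.mpr hφ).comp Set.singleton_injective)

lemma MSTSp_range_preimage [Fintype X] [Nonempty κ] {dist : X → X → ℝ} {a : ℝ}
    (hφ : Function.Surjective φ) (hdist : ∀ x y, φ x ≠ φ y → dist x y = a) :
    MSTSp dist (Set.range fun j => φ ⁻¹' {j}) = (Nat.card κ - 1) * a := by
  rw [MSTSp_eq_of_forall (Set.range_nonempty _), ncard_range_preimage hφ]
  rintro _ ⟨j, rfl⟩ _ ⟨j', rfl⟩ hne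
  have hjj : j ≠ j' := fun h => hne (by rw [h])
  refine edgeWeight_eq_of_forall (hφ.nonempty_preimage.mpr (Set.singleton_nonempty j))
    (hφ.nonempty_preimage.mpr (Set.singleton_nonempty j')) ?_ ?_
  · intro x hx y hy
    exact hdist x y (by rw [hx, hy]; exact hjj)
  · intro y hy x hx
    exact hdist y x (by rw [hx, hy]; exact hjj.symm)

end Clustering

section Blocks

variable {ι : Type*} [Fintype ι] {s : ι → ℕ}

lemma ncard_setOf_fst (p : ι → Prop) [DecidablePred p] :
    {x : Σ i, Fin (s i) | p x.1}.ncard = ∑ i with p i, s i := by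
  rw [← Nat.card_coe_set_eq, Set.coe_ofPred, Nat.card_congr (Equiv.subtypeSigmaEquiv _ p),
    Nat.card_eq_fintype_card, Fintype.card_sigma]
  simp only [Fintype.card_fin]
  exact (Finset.sum_subtype _ (by simp) s).symm

lemma exists_blockMap_of_isClustering {𝒞 : Set (Set (Σ i, Fin (s i)))} (h𝒞 : IsClustering 𝒞)
    (hs : ∀ i, 0 < s i)
    (hblock : ∀ x y : Σ i, Fin (s i), x.1 = y.1 → ∀ A ∈ 𝒞, ∀ B ∈ 𝒞, x ∈ A → y ∈ B → A = B) :
    ∃ g : ι → {A // A ∈ 𝒞}, ∀ A : {A // A ∈ 𝒞}, A.1.ncard = ∑ i with g i = A, s i := by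
  choose g hg𝒞 hg using fun i => h𝒞.exists_mem_s13 ⟨i, ⟨0, hs i⟩⟩
  have hmem : ∀ x : Σ i, Fin (s i), x ∈ g x.1 := fun x => by
    obtain ⟨B, hB, hxB⟩ := h𝒞.exists_mem_s13 x
    rwa [hblock ⟨x.1, ⟨0, hs x.1⟩⟩ x rfl _ (hg𝒞 x.1) B hB (hg x.1) hxB]
  refine ⟨fun i => ⟨g i, hg𝒞 i⟩, fun A => ?_⟩
  rw [h𝒞.eq_setOf (g := fun x => ⟨g x.1, hg𝒞 x.1⟩) hmem A]
  exact ncard_setOf_fst (s := s) (fun i => (⟨g i, hg𝒞 i⟩ : {A // A ∈ 𝒞}) = A)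

end Blocks

lemma sum_fiber_eq_of_le {ι κ : Type*} [Fintype ι] [Fintype κ] [DecidableEq κ] {s : ι → ℕ}
    {g : ι → κ} {T : ℕ} (hsum : ∑ i, s i = Fintype.card κ * T)
    (hle : ∀ k, T ≤ ∑ i with g i = k, s i) (k : κ) : ∑ i with g i = k, s i = T := by
  have h : ∑ _k : κ, T = ∑ k, ∑ i with g i = k, s i := by
    rw [Finset.sum_fiberwise, hsum, Finset.sum_const, Finset.card_univ, smul_eq_mul]
  exact ((Finset.sum_eq_sum_iff_of_le fun k _ => hle k).mp h k (Finset.mem_univ k)).symm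

lemma card_eq_three_of_sum_eq {ι : Type*} {s : ι → ℕ} {T : ℕ} (hT : 0 < T)
    (hlo : ∀ i, (T : ℝ) / 4 < s i) (hhi : ∀ i, (s i : ℝ) < T / 2) {F : Finset ι}
    (hF : ∑ i ∈ F, s i = T) : F.card = 3 := by
  have hFne : F.Nonempty := Finset.nonempty_of_sum_ne_zero (hF.trans_ne hT.ne')
  have hFR : ∑ i ∈ F, (s i : ℝ) = T := by exact_mod_cast hF
  have h4 := Finset.sum_lt_sum_of_nonempty hFne fun i _ => hlo i
  have h2 := Finset.sum_lt_sum_of_nonempty hFne fun i _ => hhi i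
  rw [Finset.sum_const, nsmul_eq_mul, hFR] at h4 h2
  have hTR : (0 : ℝ) < T := by exact_mod_cast hT
  have hlt : F.card < 4 := by exact_mod_cast (by nlinarith : (F.card : ℝ) < 4)
  have hgt : 2 < F.card := by exact_mod_cast (by nlinarith : (2 : ℝ) < F.card)
  omega

theorem MSTSp_clustering_iff_three_partition (m T : ℕ) (hm : 2 ≤ m) (hT : 0 < T)
    (s : Fin (3 * m) → ℕ) (hs : ∀ i, 0 < s i)
    (hsum : ∑ i, s i = m * T)
    (hlo : ∀ i, (T : ℝ) / 4 < (s i : ℝ)) (hhi : ∀ i, (s i : ℝ) < (T : ℝ) / 2)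
    (α : ℝ) (hα : 1 / 2 < α)
    (dist : (Σ i : Fin (3 * m), Fin (s i)) → (Σ i : Fin (3 * m), Fin (s i)) → ℝ)
    (hdist : ∀ x y : (Σ i : Fin (3 * m), Fin (s i)),
      dist x y = if x.1 = y.1 then 1 / 2 else α) :
    (∃ 𝒞 : Set (Set (Σ i : Fin (3 * m), Fin (s i))),
        IsClustering 𝒞 ∧ 𝒞.ncard = m ∧ (∀ C ∈ 𝒞, T ≤ C.ncard) ∧
        MSTSp dist 𝒞 = (m - 1 : ℝ) * α) ↔
      ∃ f : Fin (3 * m) → Fin m, ∀ j : Fin m,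
        (Finset.univ.filter (fun i => f i = j)).card = 3 ∧
        ∑ i ∈ Finset.univ.filter (fun i => f i = j), s i = T := by
  constructor
  · rintro ⟨𝒞, h𝒞, hcard, hsize, hmst⟩
    have h0 : ∀ x y, 0 ≤ dist x y := fun x y => by rw [hdist]; split_ifs <;> linarith
    have hle : ∀ x y, dist x y ≤ α := fun x y => by rw [hdist]; split_ifs <;> linarith
    obtain ⟨g, hg⟩ := exists_blockMap_of_isClustering h𝒞 hs
      fun x y hxy A hA B hB hx hy => eq_of_dist_lt_of_MSTSp_eq h𝒞.1 h0 hle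
        (by rw [hcard]; exact hmst) hA hB hx hy (by rwa [hdist, if_pos hxy])
    have hcard' : Fintype.card {A // A ∈ 𝒞} = m := by
      rw [← Nat.card_eq_fintype_card, Nat.card_coe_set_eq, hcard]
    have hgT := sum_fiber_eq_of_le (g := g) (by rw [hcard', hsum]) fun A => by
      rw [← hg A]
      exact hsize A A.2
    let e := Fintype.equivFinOfCardEq hcard'
    refine ⟨e ∘ g, fun j => ?_⟩
    simp only [Function.comp_apply, ← Equiv.eq_symm_apply]
    exact ⟨card_eq_three_of_sum_eq hT hlo hhi (hgT _), hgT _⟩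
  · rintro ⟨f, hf⟩
    have hφ : Function.Surjective fun x : Σ i, Fin (s i) => f x.1 := fun j => by
      obtain ⟨i, hi⟩ := Finset.card_pos.mp (by rw [(hf j).1]; norm_num)
      exact ⟨⟨i, ⟨0, hs i⟩⟩, (Finset.mem_filter.mp hi).2⟩
    have : Nonempty (Fin m) := ⟨⟨0, by omega⟩⟩
    refine ⟨_, isClustering_range_preimage hφ, by rw [ncard_range_preimage hφ, Nat.card_fin],
      ?_, ?_⟩
    · rintro _ ⟨j, rfl⟩
      exact (ncard_setOf_fst (s := s) (fun i => f i = j)).trans (hf j).2 |>.ge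
    · rw [MSTSp_range_preimage hφ fun x y hxy => by rw [hdist, if_neg fun h => hxy (by rw [h])],
        Nat.card_fin]

end ClusterSpacing
end
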